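/- arXiv:2011.06907 — 2 statements merged into one kernel-verified Lean document; each statement's English description precedes it below -/
import Mathlib

section
/- For any even integer N ≥ 2, the function v(x) = -(1/γ²)(−1/(8N²) + x²/2 + ∑_{k=1}^{N} (-1)^k (x - x_k)² H(x - x_k)), with x_k = (2k-1)/(2N), satisfies v(0) = v(1), v'(0) = v'(1) = 0, and ∫_0^1 v(x) dx = 0. -/
/-!
Up to the factor `-1/γ²`, `v` is `w(x) = -1/(8N²) + x²/2 + ∑ₖ (-1)ᵏ (x - xₖ)₊²`, a `C¹` piecewise
quadratic whose second derivative is a square wave. Because `t ↦ t₊ⁿ⁺¹` has derivative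
`(n+1) t₊ⁿ` for `n ≥ 1`, both `w` and an explicit antiderivative of it differentiate term by term.
At `0` every ramp `(x - xₖ)₊` vanishes and at `1` it equals `1 - xₖ`, so the four claims reduce to
the alternating moments `∑ₖ (-1)ᵏ (1 - xₖ)ʲ` for `j = 1, 2, 3`. For even `N` these are polynomial
sums over the odd numbers `2k - 1`, evaluated by pairing consecutive terms.
-/

open Finset Filter Topology

theorem hasDerivAt_max_zero_pow_succ {n : ℕ} (hn : n ≠ 0) (x : ℝ) :
    HasDerivAt (fun y : ℝ => max y 0 ^ (n + 1)) ((n + 1) * max x 0 ^ n) x := by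
  rcases lt_trichotomy x 0 with hx | rfl | hx
  · have hzero : (fun y : ℝ => max y 0 ^ (n + 1)) =ᶠ[𝓝 x] fun _ => 0 := by
      filter_upwards [Iio_mem_nhds hx] with y hy
      simp [max_eq_right (Set.mem_Iio.1 hy).le]
    rw [max_eq_right hx.le, zero_pow hn, mul_zero]
    exact (hasDerivAt_const x 0).congr_of_eventuallyEq hzero
  · have hleft : HasDerivWithinAt (fun y : ℝ => max y 0 ^ (n + 1)) 0 (Set.Iic 0) 0 :=
      (hasDerivWithinAt_const _ _ 0).congr (fun y hy => by simp [max_eq_right (Set.mem_Iic.1 hy)])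
        (by simp)
    have hright : HasDerivWithinAt (fun y : ℝ => max y 0 ^ (n + 1)) 0 (Set.Ici 0) 0 := by
      have := (hasDerivAt_pow (n + 1) (0 : ℝ)).hasDerivWithinAt (s := Set.Ici 0)
      rw [Nat.add_sub_cancel, zero_pow hn, mul_zero] at this
      exact this.congr (fun y hy => by simp [max_eq_left (Set.mem_Ici.1 hy)]) (by simp)
    simpa [zero_pow hn, Set.Iic_union_Ici] using hleft.union hright
  · have hpow : (fun y : ℝ => max y 0 ^ (n + 1)) =ᶠ[𝓝 x] fun y => y ^ (n + 1) := by
      filter_upwards [Ioi_mem_nhds hx] with y hy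
      rw [max_eq_left (le_of_lt hy)]
    rw [max_eq_left hx.le]
    simpa using (hasDerivAt_pow (n + 1) x).congr_of_eventuallyEq hpow

theorem sum_neg_one_pow_mul_cubic_odd {N : ℕ} (hN : Even N) (a b c d : ℝ) :
    ∑ k ∈ Icc 1 N, (-1 : ℝ) ^ k *
        (a + b * (2 * k - 1) + c * (2 * k - 1) ^ 2 + d * (2 * k - 1) ^ 3) =
      b * N + 2 * c * N ^ 2 + d * (4 * N ^ 3 - 3 * N) := by
  obtain ⟨M, rfl⟩ := hN
  induction M with
  | zero => simp
  | succ m ih =>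
    rw [show m + 1 + (m + 1) = (m + m + 1) + 1 by ring, sum_Icc_succ_top (by omega),
      sum_Icc_succ_top (by omega), ih, (Odd.neg_one_pow ⟨m, by ring⟩ : (-1 : ℝ) ^ (m + m + 1) = -1),
      (Even.neg_one_pow ⟨m + 1, by ring⟩ : (-1 : ℝ) ^ (m + m + 1 + 1) = 1)]
    push_cast
    ring

noncomputable def splineNode (N k : ℕ) : ℝ := (2 * k - 1) / (2 * N)

theorem splineNode_pos {N k : ℕ} (hk : k ∈ Icc 1 N) : 0 < splineNode N k := by
  obtain ⟨hk1, hkN⟩ := mem_Icc.1 hk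
  have hk1' : (1 : ℝ) ≤ k := by exact_mod_cast hk1
  have hkN' : (k : ℝ) ≤ N := by exact_mod_cast hkN
  unfold splineNode
  apply div_pos <;> linarith

theorem splineNode_le_one {N k : ℕ} (hk : k ∈ Icc 1 N) : splineNode N k ≤ 1 := by
  obtain ⟨hk1, hkN⟩ := mem_Icc.1 hk
  have hk1' : (1 : ℝ) ≤ k := by exact_mod_cast hk1
  have hkN' : (k : ℝ) ≤ N := by exact_mod_cast hkN
  unfold splineNode
  rw [div_le_one (by linarith)]
  linarith

theorem sum_neg_one_pow_mul_one_sub_splineNode {N : ℕ} (hN : Even N) (hN0 : N ≠ 0) :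
    ∑ k ∈ Icc 1 N, (-1 : ℝ) ^ k * (1 - splineNode N k) = -1 / 2 := by
  have hN' : (N : ℝ) ≠ 0 := by exact_mod_cast hN0
  calc _ = ∑ k ∈ Icc 1 N, (-1 : ℝ) ^ k *
        (1 + -1 / (2 * N) * (2 * k - 1) + 0 * (2 * k - 1) ^ 2 + 0 * (2 * k - 1) ^ 3) := by
        refine sum_congr rfl fun k _ => ?_
        unfold splineNode; ring
    _ = -1 / 2 := by rw [sum_neg_one_pow_mul_cubic_odd hN]; field_simp; ring

theorem sum_neg_one_pow_mul_one_sub_splineNode_sq {N : ℕ} (hN : Even N) (hN0 : N ≠ 0) :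
    ∑ k ∈ Icc 1 N, (-1 : ℝ) ^ k * (1 - splineNode N k) ^ 2 = -1 / 2 := by
  have hN' : (N : ℝ) ≠ 0 := by exact_mod_cast hN0
  calc _ = ∑ k ∈ Icc 1 N, (-1 : ℝ) ^ k *
        (1 + -1 / N * (2 * k - 1) + 1 / (4 * N ^ 2) * (2 * k - 1) ^ 2 + 0 * (2 * k - 1) ^ 3) := by
        refine sum_congr rfl fun k _ => ?_
        unfold splineNode; field_simp; ring
    _ = -1 / 2 := by rw [sum_neg_one_pow_mul_cubic_odd hN]; field_simp; ring

theorem sum_neg_one_pow_mul_one_sub_splineNode_cube {N : ℕ} (hN : Even N) (hN0 : N ≠ 0) :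
    ∑ k ∈ Icc 1 N, (-1 : ℝ) ^ k * (1 - splineNode N k) ^ 3 = -1 / 2 + 3 / (8 * (N : ℝ) ^ 2) := by
  have hN' : (N : ℝ) ≠ 0 := by exact_mod_cast hN0
  calc _ = ∑ k ∈ Icc 1 N, (-1 : ℝ) ^ k *
        (1 + -3 / (2 * N) * (2 * k - 1) + 3 / (4 * N ^ 2) * (2 * k - 1) ^ 2
          + -1 / (8 * N ^ 3) * (2 * k - 1) ^ 3) := by
        refine sum_congr rfl fun k _ => ?_
        unfold splineNode; field_simp; ring
    _ = -1 / 2 + 3 / (8 * (N : ℝ) ^ 2) := by rw [sum_neg_one_pow_mul_cubic_odd hN]; field_simp; ring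

-- The bracket in `v`, with `(x - xₖ)² H(x - xₖ)` written as the squared ramp `max (x - xₖ) 0 ^ 2`.
noncomputable def alternatingSpline (N : ℕ) (x : ℝ) : ℝ :=
  -(1 / (8 * N ^ 2)) + x ^ 2 / 2 + ∑ k ∈ Icc 1 N, (-1) ^ k * max (x - splineNode N k) 0 ^ 2

noncomputable def alternatingSplineAntideriv (N : ℕ) (x : ℝ) : ℝ :=
  -(x / (8 * N ^ 2)) + x ^ 3 / 6 + ∑ k ∈ Icc 1 N, (-1) ^ k * (max (x - splineNode N k) 0 ^ 3 / 3)

theorem hasDerivAt_alternatingSpline (N : ℕ) (x : ℝ) :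
    HasDerivAt (alternatingSpline N)
      (x + ∑ k ∈ Icc 1 N, (-1) ^ k * (2 * max (x - splineNode N k) 0)) x := by
  have hramp (k : ℕ) : HasDerivAt (fun y => max (y - splineNode N k) 0 ^ 2)
      (2 * max (x - splineNode N k) 0) x := by
    simpa [one_add_one_eq_two] using
      (hasDerivAt_max_zero_pow_succ one_ne_zero (x - splineNode N k)).comp_sub_const x _
  have hsq : HasDerivAt (fun y : ℝ => y ^ 2 / 2) x x := by
    simpa using (hasDerivAt_pow 2 x).div_const 2
  exact (hsq.const_add _).add (HasDerivAt.fun_sum fun k _ => (hramp k).const_mul _)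

theorem hasDerivAt_alternatingSplineAntideriv (N : ℕ) (x : ℝ) :
    HasDerivAt (alternatingSplineAntideriv N) (alternatingSpline N x) x := by
  have hramp (k : ℕ) : HasDerivAt (fun y => max (y - splineNode N k) 0 ^ 3 / 3)
      (max (x - splineNode N k) 0 ^ 2) x := by
    refine (((hasDerivAt_max_zero_pow_succ two_ne_zero (x - splineNode N k)).comp_sub_const x
      _).div_const 3).congr_deriv ?_
    push_cast
    ring
  have hlin : HasDerivAt (fun y : ℝ => -(y / (8 * N ^ 2))) (-(1 / (8 * (N : ℝ) ^ 2))) x :=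
    ((hasDerivAt_id' x).div_const _).fun_neg
  have hcube : HasDerivAt (fun y : ℝ => y ^ 3 / 6) (x ^ 2 / 2) x := by
    refine ((hasDerivAt_pow 3 x).div_const 6).congr_deriv ?_
    push_cast
    ring
  exact (hlin.add hcube).add (HasDerivAt.fun_sum fun k _ => (hramp k).const_mul _)

theorem alternatingSpline_zero (N : ℕ) : alternatingSpline N 0 = -(1 / (8 * N ^ 2)) := by
  rw [alternatingSpline, sum_eq_zero fun k hk => ?_]
  · ring
  · rw [max_eq_right (by linarith [splineNode_pos hk])]
    ring

theorem alternatingSpline_one {N : ℕ} (hN : Even N) (hN0 : N ≠ 0) :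
    alternatingSpline N 1 = -(1 / (8 * N ^ 2)) := by
  rw [alternatingSpline, sum_congr rfl fun k hk => by
    rw [max_eq_left (by linarith [splineNode_le_one hk])],
    sum_neg_one_pow_mul_one_sub_splineNode_sq hN hN0]
  ring

theorem hasDerivAt_alternatingSpline_zero (N : ℕ) : HasDerivAt (alternatingSpline N) 0 0 := by
  convert hasDerivAt_alternatingSpline N 0 using 1
  rw [sum_eq_zero fun k hk => ?_]
  · ring
  · rw [max_eq_right (by linarith [splineNode_pos hk])]
    ring

theorem hasDerivAt_alternatingSpline_one {N : ℕ} (hN : Even N) (hN0 : N ≠ 0) :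
    HasDerivAt (alternatingSpline N) 0 1 := by
  convert hasDerivAt_alternatingSpline N 1 using 1
  rw [sum_congr rfl fun k hk => by
    rw [max_eq_left (by linarith [splineNode_le_one hk]), mul_left_comm], ← mul_sum,
    sum_neg_one_pow_mul_one_sub_splineNode hN hN0]
  ring

theorem alternatingSplineAntideriv_zero (N : ℕ) : alternatingSplineAntideriv N 0 = 0 := by
  rw [alternatingSplineAntideriv, sum_eq_zero fun k hk => ?_]
  · ring
  · rw [max_eq_right (by linarith [splineNode_pos hk])]
    ring

theorem alternatingSplineAntideriv_one {N : ℕ} (hN : Even N) (hN0 : N ≠ 0) :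
    alternatingSplineAntideriv N 1 = 0 := by
  have hN' : (N : ℝ) ≠ 0 := by exact_mod_cast hN0
  rw [alternatingSplineAntideriv, sum_congr rfl fun k hk => by
    rw [max_eq_left (by linarith [splineNode_le_one hk]), mul_div_assoc'], ← sum_div,
    sum_neg_one_pow_mul_one_sub_splineNode_cube hN hN0]
  field_simp
  ring

theorem integral_alternatingSpline {N : ℕ} (hN : Even N) (hN0 : N ≠ 0) :
    ∫ x in (0 : ℝ)..1, alternatingSpline N x = 0 := by
  have hcont : Continuous (alternatingSpline N) :=
    continuous_iff_continuousAt.2 fun x => (hasDerivAt_alternatingSpline N x).continuousAt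
  rw [intervalIntegral.integral_eq_sub_of_hasDerivAt
    (fun x _ => hasDerivAt_alternatingSplineAntideriv N x) (hcont.intervalIntegrable _ _),
    alternatingSplineAntideriv_one hN hN0, alternatingSplineAntideriv_zero, sub_zero]

theorem sq_mul_ite_nonneg (t : ℝ) : t ^ 2 * (if 0 ≤ t then 1 else 0) = max t 0 ^ 2 := by
  split_ifs with ht
  · rw [max_eq_left ht, mul_one]
  · rw [max_eq_right (not_le.1 ht).le, mul_zero, zero_pow two_ne_zero]

theorem stmt_3_general (γ : ℝ) (N : ℕ) (hN : 2 ≤ N) (hNe : Even N)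
    (H : ℝ → ℝ) (hH : ∀ t, H t = if 0 ≤ t then 1 else 0)
    (v : ℝ → ℝ)
    (hv : ∀ x, v x = -(1 / γ ^ 2) * (-(1 / (8 * (N : ℝ) ^ 2)) + x ^ 2 / 2 +
      ∑ k ∈ Finset.Icc 1 N,
        (-1 : ℝ) ^ k * (x - (2 * (k : ℝ) - 1) / (2 * N)) ^ 2
          * H (x - (2 * (k : ℝ) - 1) / (2 * N)))) :
    v 0 = v 1 ∧ deriv v 0 = 0 ∧ deriv v 1 = 0 ∧ ∫ x in (0:ℝ)..1, v x = 0 := by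
  have hN0 : N ≠ 0 := by omega
  obtain rfl : v = fun x => -(1 / γ ^ 2) * alternatingSpline N x := by
    funext x
    simp only [hv, alternatingSpline, splineNode, hH, mul_assoc, sq_mul_ite_nonneg]
  refine ⟨by simp only [alternatingSpline_zero, alternatingSpline_one hNe hN0], ?_, ?_, ?_⟩
  · exact ((hasDerivAt_alternatingSpline_zero N).const_mul _).deriv.trans (mul_zero _)
  · exact ((hasDerivAt_alternatingSpline_one hNe hN0).const_mul _).deriv.trans (mul_zero _)
  · rw [intervalIntegral.integral_const_mul, integral_alternatingSpline hNe hN0, mul_zero]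

theorem stmt_3 (γ : ℝ) (hγ : 0 < γ) (N : ℕ) (hN : 2 ≤ N) (hNe : Even N)
    (H : ℝ → ℝ) (hH : ∀ t, H t = if 0 ≤ t then 1 else 0)
    (v : ℝ → ℝ)
    (hv : ∀ x, v x = -(1 / γ ^ 2) * (-(1 / (8 * (N : ℝ) ^ 2)) + x ^ 2 / 2 +
      ∑ k ∈ Finset.Icc 1 N,
        (-1 : ℝ) ^ k * (x - (2 * (k : ℝ) - 1) / (2 * N)) ^ 2
          * H (x - (2 * (k : ℝ) - 1) / (2 * N)))) :
    v 0 = v 1 ∧ deriv v 0 = 0 ∧ deriv v 1 = 0 ∧ ∫ x in (0:ℝ)..1, v x = 0 :=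
  stmt_3_general γ N hN hNe H hH v hv
end

section
/- For the equi-distributed lamellar function U_N with N even, the nonlocal energy K(U_N) = (1/2)∫_0^1 v(x) U_N(x) dx equals 1/(24γ²N²), where v(x) = −(1/γ²)(−1/(8N²) + x²/2 + ∑_{k=1}^{N}(−1)^k (x−x_k)² H(x−x_k)) and x_k = (2k−1)/(2N). -/
/-!
Let `w = -γ² v` and `m = round (N x)`, so that `x` lies on the `m`-th lamella
`[x_m, x_{m+1}]`. There `U_N = (-1)^m` and `w = (-1)^m ((x - m/N)² - 1/(4N²)) / 2`, so the
signs cancel and `U_N w = (‖N x‖² - 1/4) / (2N²)`, the norm being that of `ℝ/ℤ`. This function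
of `N x` is periodic, so its integral over `[0, 1]` is that of `(t² - 1/4) / (2N²)` over
`[-1/2, 1/2]`, namely `-1/(12 N²)`.
-/

open Finset intervalIntegral Function

theorem Function.Periodic.intervalIntegral_comp_natCast_mul {E : Type*} [NormedAddCommGroup E]
    [NormedSpace ℝ E] {f : ℝ → E} {T : ℝ} (hf : Periodic f T)
    (h_int : ∀ a b, IntervalIntegrable f MeasureTheory.volume a b) {n : ℕ} (hn : n ≠ 0) :
    ∫ x in 0..T, f (n * x) = ∫ x in 0..T, f x := by
  have hn' : (n : ℝ) ≠ 0 := Nat.cast_ne_zero.2 hn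
  have hperiods := hf.intervalIntegral_add_zsmul_eq n 0 h_int
  simp only [zero_add, natCast_zsmul, nsmul_eq_mul] at hperiods
  rw [integral_comp_mul_left _ hn', mul_zero, hperiods, ← Nat.cast_smul_eq_nsmul ℝ, smul_smul,
    inv_mul_cancel₀ hn', one_smul]

theorem periodic_norm_unitAddCircle_sq : Periodic (fun t : ℝ => ‖(t : UnitAddCircle)‖ ^ 2) 1 :=
  fun t => by simp only [AddCircle.coe_add, AddCircle.coe_period, add_zero]

theorem continuous_norm_unitAddCircle_sq : Continuous (fun t : ℝ => ‖(t : UnitAddCircle)‖ ^ 2) :=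
  (continuous_norm.comp (AddCircle.continuous_mk' 1)).pow 2

theorem integral_norm_unitAddCircle_sq :
    ∫ t in (0 : ℝ)..1, ‖(t : UnitAddCircle)‖ ^ 2 = 1 / 12 := by
  have hshift := periodic_norm_unitAddCircle_sq.intervalIntegral_add_eq 0 (-1 / 2)
  rw [zero_add] at hshift
  rw [hshift, integral_congr (g := fun t : ℝ => t ^ 2)]
  · norm_num [integral_pow]
  intro t ht
  rw [Set.uIcc_of_le (by norm_num)] at ht
  have hhalf : |t| ≤ |(1 : ℝ)| / 2 := by
    rw [abs_one, abs_le]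
    constructor <;> linarith [ht.1, ht.2]
  simp only [(AddCircle.norm_coe_eq_abs_iff (p := 1) one_ne_zero).2 hhalf, sq_abs]

theorem integral_norm_unitAddCircle_natCast_mul_sq {n : ℕ} (hn : n ≠ 0) :
    ∫ x in (0 : ℝ)..1, ‖((n * x : ℝ) : UnitAddCircle)‖ ^ 2 = 1 / 12 := by
  rw [periodic_norm_unitAddCircle_sq.intervalIntegral_comp_natCast_mul
    (fun a b => continuous_norm_unitAddCircle_sq.intervalIntegrable a b) hn,
    integral_norm_unitAddCircle_sq]

noncomputable section

def heaviside (t : ℝ) : ℝ := if 0 ≤ t then 1 else 0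

def lamellarProfile (N : ℕ) (x : ℝ) : ℝ :=
  1 + 2 * ∑ k ∈ Icc 1 N, (-1 : ℝ) ^ k * heaviside (x - (2 * k - 1) / (2 * N))

/-- The potential `w = -γ² v`. -/
def lamellarPotential (N : ℕ) (x : ℝ) : ℝ :=
  -(1 / (8 * (N : ℝ) ^ 2)) + x ^ 2 / 2 +
    ∑ k ∈ Icc 1 N,
      (-1 : ℝ) ^ k * (x - (2 * k - 1) / (2 * N)) ^ 2 * heaviside (x - (2 * k - 1) / (2 * N))

end

theorem sum_Icc_neg_one_pow (m : ℕ) : ∑ k ∈ Icc 1 m, (-1 : ℝ) ^ k = ((-1) ^ m - 1) / 2 := by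
  induction m with
  | zero => simp
  | succ m ih => rw [sum_Icc_succ_top (by omega), ih, pow_succ]; ring

theorem sum_Icc_neg_one_pow_mul_sq (m : ℕ) (x h : ℝ) :
    ∑ k ∈ Icc 1 m, (-1 : ℝ) ^ k * (x - (2 * k - 1) * h) ^ 2
      = ((-1) ^ m * ((x - 2 * m * h) ^ 2 - h ^ 2) - x ^ 2 + h ^ 2) / 2 := by
  induction m with
  | zero => simp
  | succ m ih => rw [sum_Icc_succ_top (by omega), ih, pow_succ]; push_cast; ring

theorem sum_Icc_mul_heaviside {N : ℕ} (hN : 0 < N) {x : ℝ} (hx : x ≤ 1) (g : ℕ → ℝ) :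
    ∑ k ∈ Icc 1 N, g k * heaviside (x - (2 * k - 1) / (2 * N))
      = ∑ k ∈ Icc 1 ⌊N * x + 1 / 2⌋₊, g k := by
  have hN' : (0 : ℝ) < N := Nat.cast_pos.2 hN
  have hle : ⌊N * x + 1 / 2⌋₊ ≤ N := by
    refine Nat.lt_succ_iff.1 ((Nat.floor_lt' N.succ_ne_zero).2 ?_)
    push_cast
    nlinarith
  simp only [heaviside, mul_ite, mul_one, mul_zero]
  rw [← sum_filter]
  congr 1
  ext k
  simp only [mem_filter, mem_Icc, sub_nonneg, div_le_iff₀ (by positivity : (0 : ℝ) < 2 * N)]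
  constructor
  · rintro ⟨⟨hk₁, -⟩, hk⟩
    exact ⟨hk₁, (Nat.le_floor_iff' (by omega)).2 (by linarith)⟩
  · rintro ⟨hk₁, hk⟩
    have := (Nat.le_floor_iff' (by omega)).1 hk
    exact ⟨⟨hk₁, hk.trans hle⟩, by linarith⟩

section

variable {N : ℕ} (hN : 0 < N) {x : ℝ} (hx : x ≤ 1)
include hN hx

theorem lamellarProfile_eq : lamellarProfile N x = (-1) ^ ⌊N * x + 1 / 2⌋₊ := by
  rw [lamellarProfile, sum_Icc_mul_heaviside hN hx, sum_Icc_neg_one_pow]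
  ring

theorem lamellarPotential_eq :
    lamellarPotential N x = (-1) ^ ⌊N * x + 1 / 2⌋₊ *
      ((x - ⌊N * x + 1 / 2⌋₊ / N) ^ 2 - 1 / (4 * N ^ 2)) / 2 := by
  have hN' : (N : ℝ) ≠ 0 := Nat.cast_ne_zero.2 hN.ne'
  have hxk (k : ℕ) : (2 * k - 1) / (2 * N) = (2 * k - 1) * (1 / (2 * N) : ℝ) := by ring
  rw [lamellarPotential, sum_Icc_mul_heaviside hN hx]
  simp only [hxk, sum_Icc_neg_one_pow_mul_sq]
  field_simp
  ring

end

theorem lamellarProfile_mul_lamellarPotential {N : ℕ} (hN : 0 < N) {x : ℝ} (hx₀ : 0 ≤ x)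
    (hx₁ : x ≤ 1) :
    lamellarProfile N x * lamellarPotential N x
      = (‖((N * x : ℝ) : UnitAddCircle)‖ ^ 2 - 1 / 4) / (2 * N ^ 2) := by
  have hround : (round (N * x) : ℝ) = ⌊N * x + 1 / 2⌋₊ := by
    rw [round_eq, natCast_floor_eq_intCast_floor (by positivity)]
  rw [lamellarProfile_eq hN hx₁, lamellarPotential_eq hN hx₁, UnitAddCircle.norm_eq, sq_abs,
    hround]
  set m := ⌊N * x + 1 / 2⌋₊
  have hsign : ((-1 : ℝ) ^ m) ^ 2 = 1 := by rw [← pow_mul, pow_mul', neg_one_sq, one_pow]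
  have hN' : (N : ℝ) ≠ 0 := Nat.cast_ne_zero.2 hN.ne'
  field_simp
  rw [hsign, one_mul]

theorem stmt_13_general (γ : ℝ) (N : ℕ) (hN : 2 ≤ N)
    (H : ℝ → ℝ) (hH : ∀ t, H t = if 0 ≤ t then 1 else 0)
    (U : ℝ → ℝ)
    (hU : ∀ x, U x = 1 + 2 * ∑ k ∈ Finset.Icc 1 N,
      (-1 : ℝ) ^ k * H (x - (2 * (k : ℝ) - 1) / (2 * N)))
    (v : ℝ → ℝ)
    (hv : ∀ x, v x = -(1 / γ ^ 2) * (-(1 / (8 * (N : ℝ) ^ 2)) + x ^ 2 / 2 +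
      ∑ k ∈ Finset.Icc 1 N,
        (-1 : ℝ) ^ k * (x - (2 * (k : ℝ) - 1) / (2 * N)) ^ 2
          * H (x - (2 * (k : ℝ) - 1) / (2 * N)))) :
    (1 / 2) * ∫ x in (0:ℝ)..1, U x * v x = 1 / (24 * γ ^ 2 * (N : ℝ) ^ 2) := by
  obtain rfl : H = heaviside := funext hH
  obtain rfl : U = lamellarProfile N := funext hU
  obtain rfl : v = fun x => -(1 / γ ^ 2) * lamellarPotential N x := funext hv
  have hN₀ : 0 < N := by omega
  have hUv : ∀ x ∈ Set.uIcc (0 : ℝ) 1,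
      lamellarProfile N x * (-(1 / γ ^ 2) * lamellarPotential N x)
        = -(1 / (2 * γ ^ 2 * N ^ 2)) * (‖((N * x : ℝ) : UnitAddCircle)‖ ^ 2 - 1 / 4) := by
    intro x hx
    rw [Set.uIcc_of_le zero_le_one] at hx
    rw [mul_left_comm, lamellarProfile_mul_lamellarPotential hN₀ hx.1 hx.2]
    ring
  have hint : IntervalIntegrable (fun x : ℝ => ‖((N * x : ℝ) : UnitAddCircle)‖ ^ 2)
      MeasureTheory.volume 0 1 :=
    (continuous_norm_unitAddCircle_sq.comp (continuous_const_mul (N : ℝ))).intervalIntegrable 0 1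
  rw [integral_congr hUv, integral_const_mul, integral_sub hint intervalIntegrable_const,
    integral_norm_unitAddCircle_natCast_mul_sq hN₀.ne']
  simp only [integral_const, sub_zero, smul_eq_mul]
  ring

theorem stmt_13 (γ : ℝ) (hγ : 0 < γ) (N : ℕ) (hN : 2 ≤ N) (hNe : Even N)
    (H : ℝ → ℝ) (hH : ∀ t, H t = if 0 ≤ t then 1 else 0)
    (U : ℝ → ℝ)
    (hU : ∀ x, U x = 1 + 2 * ∑ k ∈ Finset.Icc 1 N,
      (-1 : ℝ) ^ k * H (x - (2 * (k : ℝ) - 1) / (2 * N)))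
    (v : ℝ → ℝ)
    (hv : ∀ x, v x = -(1 / γ ^ 2) * (-(1 / (8 * (N : ℝ) ^ 2)) + x ^ 2 / 2 +
      ∑ k ∈ Finset.Icc 1 N,
        (-1 : ℝ) ^ k * (x - (2 * (k : ℝ) - 1) / (2 * N)) ^ 2
          * H (x - (2 * (k : ℝ) - 1) / (2 * N)))) :
    (1 / 2) * ∫ x in (0:ℝ)..1, U x * v x = 1 / (24 * γ ^ 2 * (N : ℝ) ^ 2) :=
  stmt_13_general γ N hN H hH U hU v hv
end
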